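/- For all natural numbers n and p, the following identity of integers holds: ∑_{k=0}^{n+1} (−1)^{n+1−k} · C(n+1, k) · cad⁺(k,p) = (p+1)! · S(n+1, p+1), where cad⁺(k,p) denotes the number of strictly monotone maps c : Fin(p+1) → Finset (Fin k) with c 0 ≠ ∅ (anchored chains of length p in Fin k; this is 0 for k = 0), C(a,b) is the binomial coefficient, and S is the Stirling number of the second kind. (This expresses the matrix identity bin⁻¹ · cad⁺ = breve cad⁺.) -/

import Mathlib

/-!
An anchored chain `c 0 ⊊ ⋯ ⊊ c p` in `Fin k` is the same as the function sending `x` to the first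
level at which it enters the chain (or to `⊤` if it never does); the chain conditions say exactly
that every level `0, …, p` is attained. Recording the set `S` of elements that do enter, such a
function is a surjection `S → Fin (p + 1)`, and surjections onto a `(p + 1)`-element set are
partitions into `p + 1` blocks together with a labelling of the blocks. Hence
`cad⁺(k, p) = ∑ₘ C(k, m) (p + 1)! S(m, p + 1)`, and binomial inversion gives the theorem.
-/

/-- The Stirling number of the second kind `S(n,k)`. -/
noncomputable def stirling2 (n k : ℕ) : ℕ :=
  Nat.card {P : Finpartition (Finset.univ : Finset (Fin n)) // P.parts.card = k}

/-- `cad⁺(k,p)`: the number of anchored chains of length `p` in `Fin k`. -/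
noncomputable def cadPlus (k p : ℕ) : ℕ :=
  Nat.card {c : Fin (p + 1) → Finset (Fin k) // StrictMono c ∧ c 0 ≠ ∅}

open Finset Function

lemma WithTop.ext_le_coe {ι : Type*} [PartialOrder ι] {a b : WithTop ι}
    (h : ∀ i : ι, a ≤ i ↔ b ≤ i) : a = b := by
  induction a using WithTop.recTopCoe with
  | top => induction b using WithTop.recTopCoe with
    | top => rfl
    | coe j => simpa using h j
  | coe k => induction b using WithTop.recTopCoe with
    | top => simpa using h k
    | coe j => exact congrArg _ (le_antisymm (by simpa using h j) (by simpa using h k))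

section LevelSets
variable {α : Type*}

def entryLevel [DecidableEq α] {ι : Type*} [Fintype ι] [LinearOrder ι] (c : ι → Finset α) (x : α) :
    WithTop ι :=
  (univ.filter fun i => x ∈ c i).min

lemma entryLevel_le_iff [DecidableEq α] {ι : Type*} [Fintype ι] [LinearOrder ι] {c : ι → Finset α}
    (hc : Monotone c) {x : α} {i : ι} : entryLevel c x ≤ i ↔ x ∈ c i := by
  rw [entryLevel, Finset.min, Finset.inf_le_iff (WithTop.coe_lt_top i)]
  simp only [mem_filter, mem_univ, true_and, WithTop.coe_le_coe]
  exact ⟨fun ⟨j, hj, hji⟩ => hc hji hj, fun hi => ⟨i, hi, le_rfl⟩⟩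

variable [Fintype α]

def levelSets {ι : Type*} [LinearOrder ι] (f : α → WithTop ι) (i : ι) : Finset α :=
  univ.filter fun x => f x ≤ i

lemma mem_levelSets {ι : Type*} [LinearOrder ι] {f : α → WithTop ι} {i : ι} {x : α} :
    x ∈ levelSets f i ↔ f x ≤ i := by
  simp [levelSets]

lemma monotone_levelSets {ι : Type*} [LinearOrder ι] (f : α → WithTop ι) :
    Monotone (levelSets f) := fun i j hij x => by
  simp only [mem_levelSets]
  exact fun h => h.trans (WithTop.coe_le_coe.2 hij)

def levelSetsEquiv [DecidableEq α] (ι : Type*) [Fintype ι] [LinearOrder ι] :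
    (α → WithTop ι) ≃ {c : ι → Finset α // Monotone c} where
  toFun f := ⟨levelSets f, monotone_levelSets f⟩
  invFun c := entryLevel c.1
  left_inv f := funext fun x => WithTop.ext_le_coe fun i => by
    rw [entryLevel_le_iff (monotone_levelSets f), mem_levelSets]
  right_inv c := Subtype.ext <| funext fun i => Finset.ext fun x => by
    rw [mem_levelSets, entryLevel_le_iff c.2]

variable {p : ℕ} {f : α → WithTop (Fin (p + 1))}

lemma levelSets_zero_ne_empty_iff : levelSets f 0 ≠ ∅ ↔ ∃ x, f x = (0 : Fin (p + 1)) := by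
  rw [← nonempty_iff_ne_empty]
  refine exists_congr fun x => ?_
  rw [mem_levelSets]
  induction f x using WithTop.recTopCoe with
  | top => simp
  | coe a => simp

lemma levelSets_castSucc_lt_succ_iff (i : Fin p) :
    levelSets f i.castSucc < levelSets f i.succ ↔ ∃ x, f x = i.succ := by
  rw [ssubset_iff_of_subset (monotone_levelSets f i.castSucc_le_succ)]
  refine exists_congr fun x => ?_
  rw [mem_levelSets, mem_levelSets]
  induction f x using WithTop.recTopCoe with
  | top => simp
  | coe a => simp [Fin.le_castSucc_iff, le_antisymm_iff]

lemma strictMono_levelSets_and_ne_empty_iff :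
    StrictMono (levelSets f) ∧ levelSets f 0 ≠ ∅ ↔ ∀ j : Fin (p + 1), ∃ x, f x = j := by
  rw [Fin.strictMono_iff_lt_succ, Fin.forall_fin_succ, and_comm, levelSets_zero_ne_empty_iff]
  simp only [levelSets_castSucc_lt_succ_iff]

end LevelSets

lemma cadPlus_eq_card_covering (k p : ℕ) :
    cadPlus k p = Nat.card {f : Fin k → WithTop (Fin (p + 1)) // ∀ j : Fin (p + 1), ∃ x, f x = j} :=
  Nat.card_congr <| ((levelSetsEquiv _).subtypeEquiv
    (q := fun c => StrictMono c.1 ∧ c.1 0 ≠ ∅)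
    fun _ => strictMono_levelSets_and_ne_empty_iff.symm).trans
    (Equiv.subtypeSubtypeEquivSubtype fun {c} (h : StrictMono c ∧ c 0 ≠ ∅) => h.1.monotone) |>.symm

section ExtendByTop
variable {α β : Type*} [DecidableEq α] {S : Finset α} {g : S → β} {a : α}

def extendByTop (S : Finset α) (g : S → β) (a : α) : WithTop β :=
  if h : a ∈ S then g ⟨a, h⟩ else ⊤

lemma extendByTop_of_mem (h : a ∈ S) : extendByTop S g a = g ⟨a, h⟩ := dif_pos h

lemma extendByTop_ne_top_iff : extendByTop S g a ≠ ⊤ ↔ a ∈ S := by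
  by_cases h : a ∈ S <;> simp [extendByTop, h]

lemma exists_extendByTop_eq_iff_surjective :
    (∀ b : β, ∃ a, extendByTop S g a = b) ↔ Surjective g := by
  refine ⟨fun h b => ?_, fun h b => ?_⟩
  · obtain ⟨a, ha⟩ := h b
    have haS : a ∈ S := extendByTop_ne_top_iff.1 (ha ▸ WithTop.coe_ne_top)
    exact ⟨⟨a, haS⟩, WithTop.coe_injective ((extendByTop_of_mem haS).symm.trans ha)⟩
  · obtain ⟨a, rfl⟩ := h b
    exact ⟨a, extendByTop_of_mem a.2⟩

variable [Fintype α]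

noncomputable def sigmaSurjectiveEquivCovering :
    (Σ S : Finset α, {g : S → β // Surjective g}) ≃
      {f : α → WithTop β // ∀ b : β, ∃ a, f a = b} :=
  Equiv.ofBijective
    (fun x => ⟨extendByTop x.1 x.2.1, exists_extendByTop_eq_iff_surjective.2 x.2.2⟩) <| by
    constructor
    · rintro ⟨S, g, hg⟩ ⟨T, h, hh⟩ he
      have he' : extendByTop S g = extendByTop T h := congrArg Subtype.val he
      obtain rfl : S = T := Finset.ext fun a => by
        rw [← extendByTop_ne_top_iff (g := g), ← extendByTop_ne_top_iff (g := h), he']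
      obtain rfl : g = h := funext fun a => WithTop.coe_injective <| by
        rw [← extendByTop_of_mem a.2, ← extendByTop_of_mem a.2, he']
      rfl
    · rintro ⟨f, hf⟩
      classical
      set S := univ.filter fun a => f a ≠ ⊤
      have hS : ∀ a, a ∈ S ↔ f a ≠ ⊤ := by simp [S]
      set g : S → β := fun a => (f a).untop ((hS a).1 a.2)
      have hfg : extendByTop S g = f := funext fun a => by
        by_cases h : a ∈ S
        · rw [extendByTop_of_mem h, WithTop.coe_untop]
        · rw [not_ne_iff.1 (mt extendByTop_ne_top_iff.1 h), not_ne_iff.1 (mt (hS a).2 h)]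
      exact ⟨⟨S, g, exists_extendByTop_eq_iff_surjective.1 (hfg ▸ hf)⟩, Subtype.ext hfg⟩

theorem card_covering_eq_sum_card_surjective [Fintype β] :
    Nat.card {f : α → WithTop β // ∀ b : β, ∃ a, f a = b} =
      ∑ S : Finset α, Nat.card {g : S → β // Surjective g} := by
  rw [← Nat.card_congr sigmaSurjectiveEquivCovering, Nat.card_sigma]

end ExtendByTop

namespace Finpartition
variable {α : Type*} [Fintype α] [DecidableEq α]

def toPart (P : Finpartition (univ : Finset α)) (x : α) : P.parts :=
  ⟨P.part x, P.part_mem.2 (mem_univ x)⟩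

lemma toPart_surjective (P : Finpartition (univ : Finset α)) : Surjective P.toPart := fun t =>
  let ⟨x, hx⟩ := P.nonempty_of_mem_parts t.2
  ⟨x, Subtype.ext (P.part_eq_of_mem t.2 hx)⟩

lemma toPart_eq_toPart_iff (P : Finpartition (univ : Finset α)) {x y : α} :
    P.toPart x = P.toPart y ↔ y ∈ P.part x := by
  rw [toPart, toPart, Subtype.mk.injEq, eq_comm, P.part_eq_iff_mem (P.part_mem.2 (mem_univ x))]

lemma ext_part {P Q : Finpartition (univ : Finset α)} (h : ∀ x, P.part x = Q.part x) :
    P = Q := by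
  have parts_subset : ∀ {P Q : Finpartition (univ : Finset α)}, (∀ x, P.part x = Q.part x) →
      P.parts ⊆ Q.parts := fun {P Q} h t ht => by
    obtain ⟨x, hx⟩ := P.nonempty_of_mem_parts ht
    rw [← P.part_eq_of_mem ht hx, h]
    exact Q.part_mem.2 (mem_univ x)
  exact Finpartition.ext (parts_subset h |>.antisymm (parts_subset fun x => (h x).symm))

end Finpartition

section Surjections
variable {α β : Type*} [Fintype α] [DecidableEq α] [Fintype β]

noncomputable def labelledPartitionEquivSurjective :
    (Σ P : {P : Finpartition (univ : Finset α) // #P.parts = Fintype.card β}, P.1.parts ≃ β) ≃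
      {f : α → β // Surjective f} :=
  Equiv.ofBijective
    (fun P => ⟨P.2 ∘ P.1.1.toPart, P.2.surjective.comp P.1.1.toPart_surjective⟩) <| by
    constructor
    · rintro ⟨⟨P, hP⟩, e⟩ ⟨⟨Q, hQ⟩, e'⟩ h
      have hf : ∀ x, e (P.toPart x) = e' (Q.toPart x) := congrFun (congrArg Subtype.val h)
      obtain rfl : P = Q := Finpartition.ext_part fun x => by
        ext y
        rw [← P.toPart_eq_toPart_iff, ← Q.toPart_eq_toPart_iff, ← e.injective.eq_iff, hf, hf,
          e'.injective.eq_iff]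
      obtain rfl : e = e' := Equiv.ext fun t => by
        obtain ⟨x, rfl⟩ := P.toPart_surjective t
        exact hf x
      rfl
    · rintro ⟨f, hf⟩
      classical
      set P := Finpartition.ofSetoid (Setoid.ker f)
      have hP : ∀ x y, P.toPart x = P.toPart y ↔ f x = f y := fun x y => by
        rw [P.toPart_eq_toPart_iff, Finpartition.mem_part_ofSetoid_iff_rel, Setoid.ker_def]
      set ι : β → P.parts := fun b => P.toPart (surjInv hf b)
      have hι : ∀ x, ι (f x) = P.toPart x := fun x => (hP _ _).2 (surjInv_eq hf _)
      have hιbij : Bijective ι := by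
        refine ⟨fun b b' h => ?_, fun t => ?_⟩
        · simpa only [surjInv_eq] using (hP _ _).1 h
        · obtain ⟨x, rfl⟩ := P.toPart_surjective t
          exact ⟨f x, hι x⟩
      have hcard : #P.parts = Fintype.card β := by
        rw [← Fintype.card_coe, Fintype.card_congr (Equiv.ofBijective ι hιbij)]
      exact ⟨⟨⟨P, hcard⟩, (Equiv.ofBijective ι hιbij).symm⟩, Subtype.ext <| funext fun x =>
        (Equiv.symm_apply_eq _).2 (hι x).symm⟩

theorem card_surjective_eq_factorial_mul_card_finpartition :
    Nat.card {f : α → β // Surjective f} =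
      (Fintype.card β).factorial *
        Nat.card {P : Finpartition (univ : Finset α) // #P.parts = Fintype.card β} := by
  classical
  rw [← Nat.card_congr labelledPartitionEquivSurjective, Nat.card_sigma, sum_congr rfl,
    sum_const, card_univ, smul_eq_mul, mul_comm, Nat.card_eq_fintype_card]
  rintro ⟨P, hP⟩ -
  rw [Nat.card_eq_fintype_card, Fintype.card_equiv (P.parts.equivFinOfCardEq hP |>.trans
    (Fintype.equivFin β).symm), Fintype.card_coe, hP]

end Surjections

theorem card_surjective_eq_factorial_mul_stirling2 (α : Type*) [Fintype α] (p : ℕ) :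
    Nat.card {f : α → Fin (p + 1) // Surjective f} =
      (p + 1).factorial * stirling2 (Fintype.card α) (p + 1) := by
  rw [Nat.card_congr <| ((Fintype.equivFin α).arrowCongr (Equiv.refl _)).subtypeEquiv fun f =>
      ((Fintype.equivFin α).symm.surjective_comp f).symm,
    card_surjective_eq_factorial_mul_card_finpartition, Fintype.card_fin, stirling2]

lemma cadPlus_eq_sum_choose_mul (k p : ℕ) :
    cadPlus k p = ∑ m ∈ range (k + 1), k.choose m * ((p + 1).factorial * stirling2 m (p + 1)) := by
  rw [cadPlus_eq_card_covering, card_covering_eq_sum_card_surjective, ← powerset_univ]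
  simp only [card_surjective_eq_factorial_mul_stirling2, Fintype.card_coe]
  rw [sum_powerset_apply_card (fun m => (p + 1).factorial * stirling2 m (p + 1)), card_univ,
    Fintype.card_fin]
  simp only [smul_eq_mul]

theorem sum_alternating_choose_mul_of_eq_sum_choose_mul {F G : ℕ → ℤ}
    (hF : ∀ k, F k = ∑ m ∈ range (k + 1), k.choose m * G m) (N : ℕ) :
    ∑ k ∈ range (N + 1), (-1) ^ (N - k) * N.choose k * F k = G N := by
  -- `F'` agrees with `F` on `0, …, N`, and the `N`-th forward difference at `0` of `k ↦ C(k, m)`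
  -- is `δ_{N m}`.
  set F' : ℕ → ℤ := ∑ m ∈ range (N + 1), G m • fun k => (k.choose m : ℤ)
  have hF' : ∀ k ≤ N, F k = F' k := by
    intro k hk
    simp only [hF, F', Finset.sum_apply, Pi.smul_apply, smul_eq_mul, mul_comm (G _)]
    refine sum_subset (range_subset_range.2 (by omega)) fun m _ hm => ?_
    simp [Nat.choose_eq_zero_of_lt (by simpa using hm : k < m)]
  calc ∑ k ∈ range (N + 1), (-1) ^ (N - k) * N.choose k * F k
      = (fwdDiff 1)^[N] F' 0 := by
        rw [fwdDiff_iter_eq_sum_shift]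
        refine sum_congr rfl fun k hk => ?_
        rw [hF' k (by simpa [Nat.lt_succ_iff] using hk)]
        simp
    _ = G N := by
        simp only [F', fwdDiff_iter_finsetSum, fwdDiff_iter_const_smul, Finset.sum_apply,
          Pi.smul_apply, fwdDiff_iter_choose_zero, smul_eq_mul, mul_ite, mul_one, mul_zero]
        simp

theorem binInv_mul_cadPlus (n p : ℕ) :
    ∑ k ∈ Finset.range (n + 2),
        (-1 : ℤ) ^ (n + 1 - k) * Nat.choose (n + 1) k * cadPlus k p =
      Nat.factorial (p + 1) * stirling2 (n + 1) (p + 1) := by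
  exact_mod_cast sum_alternating_choose_mul_of_eq_sum_choose_mul
    (F := fun k => cadPlus k p) (G := fun m => ((p + 1).factorial * stirling2 m (p + 1) : ℕ))
    (fun k => by simp [cadPlus_eq_sum_choose_mul]) (n + 1)
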